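/- The functions F₁(m₁₂,m₂₂) = (−1)^{m₂₂} √(m₁₂+2+E(m₁₂)(p−2)) · √(m₁₂−m₂₂+1)/√(m₁₂−m₂₂+1+O(m₁₂−m₂₂)) and F₂(m₁₂,m₂₂) = √(m₂₂+1+E(m₂₂)(p−2)) · √(m₁₂−m₂₂+1)/√(m₁₂−m₂₂+1−O(m₁₂−m₂₂)) satisfy the recurrence F₁(m₁₂,m₂₂)F₂(m₁₂+1,m₂₂−1)/(√(m₁₂−m₂₂+1)√(m₁₂−m₂₂+3)) + F₁(m₁₂,m₂₂−1)F₂(m₁₂,m₂₂−1)/(m₁₂−m₂₂+2) = 0 for all integers m₁₂ ≥ m₂₂ ≥ 1. -/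

import Mathlib

/-- `E(j) = 1` if `j` is even, `0` otherwise. -/
noncomputable def Efun (j : ℤ) : ℝ := if Even j then 1 else 0

/-- `O(j) = 1` if `j` is odd, `0` otherwise. -/
noncomputable def Ofun (j : ℤ) : ℝ := if Odd j then 1 else 0

/-- The reduced matrix element `F₁`. -/
noncomputable def F1 (p : ℝ) (m12 m22 : ℤ) : ℝ :=
  (-1 : ℝ) ^ m22.toNat * Real.sqrt ((m12 : ℝ) + 2 + Efun m12 * (p - 2)) *
    Real.sqrt ((m12 : ℝ) - m22 + 1) / Real.sqrt ((m12 : ℝ) - m22 + 1 + Ofun (m12 - m22))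

/-- The reduced matrix element `F₂`. -/
noncomputable def F2 (p : ℝ) (m12 m22 : ℤ) : ℝ :=
  Real.sqrt ((m22 : ℝ) + 1 + Efun m22 * (p - 2)) *
    Real.sqrt ((m12 : ℝ) - m22 + 1) / Real.sqrt ((m12 : ℝ) - m22 + 1 - Ofun (m12 - m22))

/-!
Write `d = m12 - m22`. Since `O(d + 2) = O(d)` and `O(d + 1) = 1 - O(d)`, both terms reduce to
`± (-1)^m22 √(m12 + 2 + E(m12)(p - 2)) √(m22 + E(m22 - 1)(p - 2)) / (√(d + 1 + O(d)) √(d + 3 - O(d)))`: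
in the first the factors `√(d + 1)`, `√(d + 3)` cancel, in the second `√(d + 2)² = d + 2` does,
and the opposite sign comes from `(-1)^(m22 - 1) = -(-1)^m22`.
-/

theorem Ofun_add_one (j : ℤ) : Ofun (j + 1) = 1 - Ofun j := by
  rcases Int.even_or_odd j with hj | hj
  · simp [Ofun, hj.add_one, Int.not_odd_iff_even.mpr hj]
  · simp [Ofun, hj, Int.not_odd_iff_even.mpr hj.add_one]

theorem Ofun_add_two (j : ℤ) : Ofun (j + 2) = Ofun j := by
  rw [show j + 2 = j + 1 + 1 by ring, Ofun_add_one, Ofun_add_one]; ring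

theorem neg_one_pow_toNat_sub_one {n : ℤ} (hn : 1 ≤ n) :
    (-1 : ℝ) ^ (n - 1).toNat = -(-1 : ℝ) ^ n.toNat := by
  rw [show n.toNat = (n - 1).toNat + 1 by omega, pow_succ]; ring

open Real

section
variable (p : ℝ) {m12 m22 : ℤ}

theorem F1_mul_F2_succ_pred_div (h : m22 ≤ m12) :
    F1 p m12 m22 * F2 p (m12 + 1) (m22 - 1) /
        (√((m12 : ℝ) - m22 + 1) * √((m12 : ℝ) - m22 + 3)) =
      (-1 : ℝ) ^ m22.toNat * √((m12 : ℝ) + 2 + Efun m12 * (p - 2)) *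
        √((m22 : ℝ) + Efun (m22 - 1) * (p - 2)) /
        (√((m12 : ℝ) - m22 + 1 + Ofun (m12 - m22)) * √((m12 : ℝ) - m22 + 3 - Ofun (m12 - m22))) := by
  have hd : (m22 : ℝ) ≤ m12 := by exact_mod_cast h
  have hs1 : √((m12 : ℝ) - m22 + 1) ≠ 0 := (sqrt_pos.mpr (by linarith)).ne'
  have hs3 : √((m12 : ℝ) - m22 + 3) ≠ 0 := (sqrt_pos.mpr (by linarith)).ne'
  rw [F1, F2, show m12 + 1 - (m22 - 1) = m12 - m22 + 2 by ring, Ofun_add_two]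
  push_cast
  rw [sub_add_cancel, show (m12 : ℝ) + 1 - (m22 - 1) + 1 = m12 - m22 + 3 by ring]
  field_simp

theorem F1_mul_F2_pred_div (h1 : 1 ≤ m22) (h : m22 ≤ m12) :
    F1 p m12 (m22 - 1) * F2 p m12 (m22 - 1) / ((m12 : ℝ) - m22 + 2) =
      -((-1 : ℝ) ^ m22.toNat * √((m12 : ℝ) + 2 + Efun m12 * (p - 2)) *
        √((m22 : ℝ) + Efun (m22 - 1) * (p - 2)) /
        (√((m12 : ℝ) - m22 + 1 + Ofun (m12 - m22)) * √((m12 : ℝ) - m22 + 3 - Ofun (m12 - m22)))) := by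
  have hd : (m22 : ℝ) ≤ m12 := by exact_mod_cast h
  have hs2 : √((m12 : ℝ) - m22 + 2) ^ 2 = (m12 : ℝ) - m22 + 2 := sq_sqrt (by linarith)
  have hd2 : (m12 : ℝ) - m22 + 2 ≠ 0 := by linarith
  rw [F1, F2, show m12 - (m22 - 1) = m12 - m22 + 1 by ring, Ofun_add_one,
    neg_one_pow_toNat_sub_one h1]
  push_cast
  rw [sub_add_cancel, show (m12 : ℝ) - (m22 - 1) + 1 = m12 - m22 + 2 by ring,
    show (m12 : ℝ) - m22 + 2 + (1 - Ofun (m12 - m22)) = m12 - m22 + 3 - Ofun (m12 - m22) by ring,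
    show (m12 : ℝ) - m22 + 2 - (1 - Ofun (m12 - m22)) = m12 - m22 + 1 + Ofun (m12 - m22) by ring]
  field_simp
  rw [hs2]

end

theorem F1_F2_first_recurrence_general (p : ℝ) (m12 m22 : ℤ)
    (h1 : 1 ≤ m22) (h2 : m22 ≤ m12) :
    F1 p m12 m22 * F2 p (m12 + 1) (m22 - 1) /
        (Real.sqrt ((m12 : ℝ) - m22 + 1) * Real.sqrt ((m12 : ℝ) - m22 + 3)) +
      F1 p m12 (m22 - 1) * F2 p m12 (m22 - 1) / ((m12 : ℝ) - m22 + 2) = 0 := by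
  rw [F1_mul_F2_succ_pred_div p h2, F1_mul_F2_pred_div p h1 h2, add_neg_cancel]

/-- The first recurrence relation for the reduced matrix elements `F₁`, `F₂`. -/
theorem F1_F2_first_recurrence (p : ℝ) (hp : 2 ≤ p) (m12 m22 : ℤ)
    (h1 : 1 ≤ m22) (h2 : m22 ≤ m12) :
    F1 p m12 m22 * F2 p (m12 + 1) (m22 - 1) /
        (Real.sqrt ((m12 : ℝ) - m22 + 1) * Real.sqrt ((m12 : ℝ) - m22 + 3)) +
      F1 p m12 (m22 - 1) * F2 p m12 (m22 - 1) / ((m12 : ℝ) - m22 + 2) = 0 :=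
  F1_F2_first_recurrence_general p m12 m22 h1 h2
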